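/- Let η be a nonzero real number and q = e^{η} (the massive regime). Then for 0 ≤ n ≤ ℓ the bra ⟨ℓ,n|| is the Hermitian conjugate of the ket ||ℓ,n⟩ up to its positive norm: for every w ∈ (ℂ²)^{⊗ℓ}, ⟨ℓ,n||(w) = ⟨||ℓ,n⟩, w⟩_H / ⟨||ℓ,n⟩, ||ℓ,n⟩⟩_H; equivalently, the Hermitian adjoint functional ⟨||ℓ,n⟩, ·⟩_H equals [ℓ¦n]_q q^{−n(ℓ−n)} · ⟨ℓ,n||. -/

import Mathlib

/-!
For real `q = e^η` the ket coefficients are real, so the Hermitian functional `⟨‖ℓ,n⟩, ·⟩_H`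
has the coefficients of the ket itself, which are those of the bra up to the scalar
`[ℓ¦n]_q q^{-n(ℓ-n)}`. Everything therefore reduces to computing the squared norm of the ket,
a sum of `q^{2Σ(S)}` over the `n`-subsets `S`. Splitting off the largest position gives the
q-Pascal recursion, so this sum is a Gaussian binomial coefficient in `q²`, which equals
`[ℓ¦n]_q q^{n(ℓ-n)}`. Finally `η ≠ 0` means `q` is not a root of unity, so no q-integer
vanishes and the norm is nonzero.
-/

open Matrix Complex Finset Filter

noncomputable section

/-- q-integer `[n]_q = (q^n - q^{-n})/(q - q⁻¹)`. -/
def qint (q : ℂ) (n : ℕ) : ℂ := (q ^ n - q⁻¹ ^ n) / (q - q⁻¹)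

/-- q-factorial `[n]_q!`. -/
def qfact (q : ℂ) (n : ℕ) : ℂ := ∏ k ∈ Finset.range n, qint q (k + 1)

/-- q-binomial coefficient `[m ¦ n]_q`. -/
def qbinom (q : ℂ) (m n : ℕ) : ℂ := qfact q m / (qfact q (m - n) * qfact q n)

/-- The set of positions where the configuration `c` equals `1`. -/
def oneSet {m : ℕ} (c : Fin m → Fin 2) : Finset (Fin m) :=
  Finset.univ.filter fun i => c i = 1

/-- The exponent `Σ(S) − n m + n(n−1)/2` (positions counted `1,…,m`). -/
def expKet (m n : ℕ) (S : Finset (Fin m)) : ℤ :=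
  (∑ i ∈ S, ((i : ℤ) + 1)) - (n : ℤ) * (m : ℤ) + ((n * (n - 1) / 2 : ℕ) : ℤ)

/-- Coefficients of the ket `||m, n⟩` in the standard basis. -/
def ketCoef (q : ℂ) (m n : ℕ) (c : Fin m → Fin 2) : ℂ :=
  if (oneSet c).card = n then q ^ expKet m n (oneSet c) else 0

/-- Coefficients of the bra `⟨m, n||` in the standard (bilinear) dual basis. -/
def braCoef (q : ℂ) (m n : ℕ) (c : Fin m → Fin 2) : ℂ :=
  (qbinom q m n)⁻¹ * q ^ ((n : ℤ) * ((m : ℤ) - (n : ℤ))) * ketCoef q m n c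

/-- Coefficients of the tilde bra `~⟨m, n||`. -/
def tbraCoef (q : ℂ) (m n : ℕ) (c : Fin m → Fin 2) : ℂ :=
  ((m.choose n : ℂ))⁻¹ *
    (if (oneSet c).card = n then q ^ (-(expKet m n (oneSet c))) else 0)

/-- Coefficients of the tilde ket `~||m, n⟩`. -/
def tketCoef (q : ℂ) (m n : ℕ) (c : Fin m → Fin 2) : ℂ :=
  qbinom q m n * q ^ (-((n : ℤ) * ((m : ℤ) - (n : ℤ)))) * ((m.choose n : ℂ))⁻¹ *
    (if (oneSet c).card = n then q ^ (-(expKet m n (oneSet c))) else 0)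

section GaussBinom

variable {R : Type*} [CommSemiring R]

/-- Gaussian binomial coefficient in the variable `x`, defined by the q-Pascal rule; in the
symmetric normalization of `qbinom`, `gaussBinom (q ^ 2) m n = qbinom q m n * q ^ (n * (m - n))`. -/
def gaussBinom (x : R) : ℕ → ℕ → R
  | _, 0 => 1
  | 0, _ + 1 => 0
  | m + 1, n + 1 => gaussBinom x m (n + 1) + x ^ (m - n) * gaussBinom x m n

@[simp]
lemma gaussBinom_zero_right (x : R) (m : ℕ) : gaussBinom x m 0 = 1 := by
  cases m <;> rfl

lemma gaussBinom_succ_succ (x : R) (m n : ℕ) :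
    gaussBinom x (m + 1) (n + 1) = gaussBinom x m (n + 1) + x ^ (m - n) * gaussBinom x m n :=
  rfl

lemma gaussBinom_eq_zero_of_lt (x : R) {m n : ℕ} (h : m < n) : gaussBinom x m n = 0 := by
  induction m generalizing n with
  | zero => obtain ⟨k, rfl⟩ := Nat.exists_eq_add_of_lt h; rfl
  | succ m ih =>
    obtain ⟨k, rfl⟩ := Nat.exists_eq_add_of_lt (Nat.zero_lt_of_lt h)
    rw [zero_add, gaussBinom_succ_succ, ih (by omega), ih (by omega), mul_zero, add_zero]

@[simp]
lemma gaussBinom_self (x : R) (m : ℕ) : gaussBinom x m m = 1 := by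
  induction m with
  | zero => rfl
  | succ m ih => simp [gaussBinom_succ_succ, gaussBinom_eq_zero_of_lt, ih]

lemma sum_powersetCard_range_pow_sum (x : R) (m n : ℕ) :
    ∑ S ∈ (range m).powersetCard n, x ^ ∑ i ∈ S, i = gaussBinom x m n * x ^ n.choose 2 := by
  induction m generalizing n with
  | zero =>
    cases n with
    | zero => simp
    | succ k => rw [powersetCard_eq_empty.2 (by simp)]; simp [gaussBinom]
  | succ m ih =>
    cases n with
    | zero => simp
    | succ k =>
      have hdisj : Disjoint ((range m).powersetCard (k + 1))
          (((range m).powersetCard k).image (insert m)) := by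
        refine disjoint_left.2 fun T hT hT' => ?_
        obtain ⟨U, -, rfl⟩ := mem_image.1 hT'
        exact notMem_range_self ((mem_powersetCard.1 hT).1 (mem_insert_self m U))
      have hinj : Set.InjOn (insert m) ((range m).powersetCard k : Set (Finset ℕ)) :=
        fun U hU V hV hUV => by
          have hmU : m ∉ U := fun h => notMem_range_self ((mem_powersetCard.1 hU).1 h)
          have hmV : m ∉ V := fun h => notMem_range_self ((mem_powersetCard.1 hV).1 h)
          rw [← erase_insert hmU, ← erase_insert hmV, hUV]
      have hins : ∀ U ∈ (range m).powersetCard k,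
          x ^ ∑ i ∈ insert m U, i = x ^ m * x ^ ∑ i ∈ U, i := fun U hU => by
          rw [sum_insert fun h => notMem_range_self ((mem_powersetCard.1 hU).1 h), pow_add]
      rw [range_add_one, powersetCard_succ_insert notMem_range_self, sum_union hdisj,
        sum_image hinj, sum_congr rfl hins, ← mul_sum, ih, ih, gaussBinom_succ_succ,
        Nat.choose_succ_succ', Nat.choose_one_right]
      rcases le_or_gt k m with hkm | hkm
      · obtain ⟨a, rfl⟩ := Nat.exists_eq_add_of_le hkm
        rw [Nat.add_sub_cancel_left]
        ring
      · simp [gaussBinom_eq_zero_of_lt x hkm, gaussBinom_eq_zero_of_lt x (hkm.trans k.lt_succ_self)]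

lemma sum_powersetCard_univ_fin_pow_sum (x : R) (m n : ℕ) :
    ∑ S ∈ (univ : Finset (Fin m)).powersetCard n, x ^ ∑ i ∈ S, (i : ℕ) =
      gaussBinom x m n * x ^ n.choose 2 := by
  rw [← sum_powersetCard_range_pow_sum, ← Nat.Iio_eq_range, ← Fin.map_valEmbedding_univ,
    powersetCard_map, sum_map]
  simp

end GaussBinom

section QNumbers

lemma qint_add_mul_qint (q : ℂ) (a b : ℕ) :
    qint q a + q ^ (a + b) * qint q b = q ^ b * qint q (a + b) := by
  by_cases hd : q - q⁻¹ = 0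
  · simp [qint, hd]
  have hq : q ≠ 0 := by rintro rfl; simp at hd
  simp only [qint, inv_pow]
  field_simp
  ring

lemma gaussBinom_sq_mul_qfact (q : ℂ) (a b : ℕ) :
    gaussBinom (q ^ 2) (a + b) b * (qfact q a * qfact q b) = qfact q (a + b) * q ^ (b * a) := by
  induction a generalizing b with
  | zero => simp [qfact]
  | succ a iha =>
    induction b with
    | zero => simp [qfact]
    | succ b ihb =>
      have h₁ := iha (b + 1)
      rw [show a + (b + 1) = a + 1 + b by omega] at h₁
      have hsplit := qint_add_mul_qint q (a + 1) (b + 1)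
      rw [show a + 1 + (b + 1) = a + 1 + b + 1 by omega] at hsplit ⊢
      simp only [gaussBinom_succ_succ, qfact, prod_range_succ, Nat.add_sub_cancel] at h₁ ihb ⊢
      linear_combination qint q (a + 1) * h₁ + q ^ (2 * (a + 1)) * qint q (b + 1) * ihb +
        q ^ ((b + 1) * a) * (∏ k ∈ range (a + 1 + b), qint q (k + 1)) * hsplit

variable {q : ℂ}

lemma qint_ne_zero (hq₀ : q ≠ 0) (hq : ¬IsOfFinOrder q) {j : ℕ} (hj : j ≠ 0) : qint q j ≠ 0 := by
  have hpow : ∀ k ≠ 0, q ^ k - q⁻¹ ^ k ≠ 0 := fun k hk h => by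
    refine hq (isOfFinOrder_iff_pow_eq_one.2 ⟨2 * k, by omega, ?_⟩)
    rw [sub_eq_zero, inv_pow] at h
    rw [mul_comm, pow_mul, sq]
    nth_rw 1 [h]
    exact inv_mul_cancel₀ (pow_ne_zero k hq₀)
  exact div_ne_zero (hpow j hj) (by simpa using hpow 1 one_ne_zero)

lemma qfact_ne_zero (hq₀ : q ≠ 0) (hq : ¬IsOfFinOrder q) (n : ℕ) : qfact q n ≠ 0 :=
  prod_ne_zero_iff.2 fun _ _ => qint_ne_zero hq₀ hq (Nat.succ_ne_zero _)

lemma qbinom_ne_zero (hq₀ : q ≠ 0) (hq : ¬IsOfFinOrder q) (m n : ℕ) : qbinom q m n ≠ 0 :=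
  div_ne_zero (qfact_ne_zero hq₀ hq m)
    (mul_ne_zero (qfact_ne_zero hq₀ hq _) (qfact_ne_zero hq₀ hq n))

lemma gaussBinom_sq_eq_qbinom (hq₀ : q ≠ 0) (hq : ¬IsOfFinOrder q) {m n : ℕ} (hn : n ≤ m) :
    gaussBinom (q ^ 2) m n = qbinom q m n * q ^ (n * (m - n)) := by
  obtain ⟨a, rfl⟩ := Nat.exists_eq_add_of_le' hn
  rw [qbinom, Nat.add_sub_cancel, div_mul_eq_mul_div, eq_div_iff
    (mul_ne_zero (qfact_ne_zero hq₀ hq a) (qfact_ne_zero hq₀ hq n))]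
  exact gaussBinom_sq_mul_qfact q a n

end QNumbers

section Ket

lemma natCast_choose_two_mul_two (n : ℕ) : (n.choose 2 : ℤ) * 2 = n * (n - 1) := by
  qify
  rw [Nat.cast_choose_two]
  ring

variable {m : ℕ}

lemma oneSet_bijective : Function.Bijective (oneSet (m := m)) := by
  refine ⟨fun c c' h => funext fun i => ?_, fun S => ⟨fun i => if i ∈ S then 1 else 0, ?_⟩⟩
  · have hi := Finset.ext_iff.1 h i
    simp only [oneSet, mem_filter, mem_univ, true_and] at hi
    exact (by decide : ∀ a b : Fin 2, (a = 1 ↔ b = 1) → a = b) _ _ hi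
  · ext i
    by_cases h : i ∈ S <;> simp [oneSet, h]

lemma sum_comp_oneSet {M : Type*} [AddCommMonoid M] (g : Finset (Fin m) → M) :
    ∑ c : Fin m → Fin 2, g (oneSet c) = ∑ S : Finset (Fin m), g S :=
  Fintype.sum_bijective oneSet oneSet_bijective _ g fun _ => rfl

lemma two_mul_expKet {n : ℕ} {S : Finset (Fin m)} (hS : S.card = n) :
    2 * expKet m n S = 2 * ((∑ i ∈ S, (i : ℕ) : ℕ) : ℤ) + n * (n + 1) - 2 * n * m := by
  rw [expKet, ← Nat.choose_two_right, sum_add_distrib, sum_const, hS]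
  push_cast
  linear_combination natCast_choose_two_mul_two n

lemma conj_ketCoef {q : ℂ} (hq : (starRingEnd ℂ) q = q) (n : ℕ) (c : Fin m → Fin 2) :
    (starRingEnd ℂ) (ketCoef q m n c) = ketCoef q m n c := by
  unfold ketCoef
  split_ifs <;> simp [map_zpow₀, hq]

lemma sum_braCoef_mul (q : ℂ) (n : ℕ) (w : (Fin m → Fin 2) → ℂ) :
    ∑ c, braCoef q m n c * w c =
      (qbinom q m n)⁻¹ * q ^ ((n : ℤ) * ((m : ℤ) - (n : ℤ))) * ∑ c, ketCoef q m n c * w c := by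
  simp only [braCoef, mul_sum, mul_assoc]

lemma sum_ketCoef_mul_self {q : ℂ} (hq₀ : q ≠ 0) (hq : ¬IsOfFinOrder q) {n : ℕ} (hn : n ≤ m) :
    ∑ c, ketCoef q m n c * ketCoef q m n c =
      qbinom q m n * q ^ (-((n : ℤ) * ((m : ℤ) - (n : ℤ)))) := by
  have hterm : ∀ S ∈ (univ : Finset (Fin m)).powersetCard n, q ^ expKet m n S * q ^ expKet m n S =
      (q ^ 2) ^ (∑ i ∈ S, (i : ℕ)) * q ^ ((n : ℤ) * (n + 1) - 2 * n * m) := fun S hS => by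
    rw [← zpow_add₀ hq₀, ← two_mul, two_mul_expKet (mem_powersetCard_univ.1 hS), add_sub_assoc,
      zpow_add₀ hq₀, ← pow_mul, ← zpow_natCast, Nat.cast_mul, Nat.cast_ofNat]
  calc ∑ c, ketCoef q m n c * ketCoef q m n c
      = ∑ S ∈ (univ : Finset (Fin m)).powersetCard n, q ^ expKet m n S * q ^ expKet m n S := by
        simp only [ketCoef, ite_zero_mul_ite_zero, and_self]
        rw [sum_comp_oneSet fun S =>
            if S.card = n then q ^ expKet m n S * q ^ expKet m n S else 0,
          ← sum_filter, powersetCard_eq_filter, powerset_univ]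
    _ = gaussBinom (q ^ 2) m n * (q ^ 2) ^ n.choose 2 * q ^ ((n : ℤ) * (n + 1) - 2 * n * m) := by
        rw [sum_congr rfl hterm, ← sum_mul, sum_powersetCard_univ_fin_pow_sum]
    _ = qbinom q m n * q ^ (-((n : ℤ) * ((m : ℤ) - (n : ℤ)))) := by
        rw [gaussBinom_sq_eq_qbinom hq₀ hq hn, ← pow_mul, ← zpow_natCast, ← zpow_natCast q,
          mul_assoc, mul_assoc, ← zpow_add₀ hq₀, ← zpow_add₀ hq₀]
        congr 2
        push_cast [Nat.cast_sub hn]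
        linear_combination natCast_choose_two_mul_two n

end Ket

/-- In the massive regime (`q = e^η` with `η` real nonzero), the bra `⟨m,n||`
is the Hermitian conjugate of the ket `||m,n⟩` up to its positive norm. -/
theorem statement10 (η : ℝ) (hη : η ≠ 0) (m n : ℕ) (hn : n ≤ m) :
    (∀ w : (Fin m → Fin 2) → ℂ,
      ∑ c : Fin m → Fin 2, braCoef (Complex.exp η) m n c * w c =
        (∑ c : Fin m → Fin 2, (starRingEnd ℂ) (ketCoef (Complex.exp η) m n c) * w c) /
        (∑ c : Fin m → Fin 2, (starRingEnd ℂ) (ketCoef (Complex.exp η) m n c) *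
          ketCoef (Complex.exp η) m n c)) ∧
    (∀ w : (Fin m → Fin 2) → ℂ,
      ∑ c : Fin m → Fin 2, (starRingEnd ℂ) (ketCoef (Complex.exp η) m n c) * w c =
        qbinom (Complex.exp η) m n *
          (Complex.exp (η : ℂ)) ^ (-((n : ℤ) * ((m : ℤ) - (n : ℤ)))) *
          ∑ c : Fin m → Fin 2, braCoef (Complex.exp η) m n c * w c) := by
  set q : ℂ := Complex.exp η
  have hq₀ : q ≠ 0 := Complex.exp_ne_zero _
  have hq : ¬IsOfFinOrder q := fun h => hη <| by
    simpa [q, Complex.norm_exp_ofReal] using h.norm_eq_one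
  have hket : ∀ c, (starRingEnd ℂ) (ketCoef q m n c) = ketCoef q m n c :=
    conj_ketCoef (by rw [← Complex.exp_conj, Complex.conj_ofReal]) n
  have hnorm := sum_ketCoef_mul_self hq₀ hq hn
  have hb := qbinom_ne_zero hq₀ hq m n
  simp only [hket, hnorm, sum_braCoef_mul, _root_.zpow_neg]
  constructor <;> intro w <;> field_simp
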